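/- Let a, b > 0 with a ≠ b, and let 0 < τ, t < 1. If t ≤ min{τ, 1-τ} or t ≥ max{τ, 1-τ}, then (a ∇ b - !_τ(a,b)) / (a ∇ b - !_t(a,b)) ≤ (log(a ∇ b) - log(!_τ(a,b))) / (log(a ∇ b) - log(!_t(a,b))). If instead min{τ, 1-τ} ≤ t ≤ max{τ, 1-τ}, the reverse inequality holds. -/

import Mathlib

/-!
The harmonic Heinz mean is a decreasing function of `t (1 - t)`, namely
`!_t(a,b) = ab(a+b) / (2(ab + t(1-t)(a-b)²))`, and the sign of `t(1-t) - τ(1-τ) = (t-τ)(1-t-τ)`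
decides which of `!_τ(a,b)`, `!_t(a,b)` is the smaller one. Both lie strictly below `a ∇ b`, so
the claim reduces to: for `0 < x ≤ y < M`, `(M - x) / (M - y) ≤ (log M - log x) / (log M - log y)`,
which is the monotonicity of the secant slopes of the concave function `log` through `M`.
-/

/-- The weighted harmonic mean of positive reals: `a !_t b = ((1-t)a⁻¹ + t b⁻¹)⁻¹`. -/
noncomputable def wharm (t a b : ℝ) : ℝ := ((1 - t) * a⁻¹ + t * b⁻¹)⁻¹

/-- The harmonic Heinz mean `!_t(a,b) = (a !_t b + a !_{1-t} b)/2`. -/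
noncomputable def heinzHarm (t a b : ℝ) : ℝ := (wharm t a b + wharm (1 - t) a b) / 2

open Real Set

lemma sub_mul_log_sub_le_of_le {x y M : ℝ} (hx : 0 < x) (hxy : x ≤ y) (hyM : y < M) :
    (M - x) * (log M - log y) ≤ (M - y) * (log M - log x) := by
  have hM : M ∈ Ioi (0 : ℝ) := (hx.trans_le hxy).trans hyM
  have hslope := strictConcaveOn_log_Ioi.concaveOn.antitoneOn_slope_lt hM
    ⟨hx, hxy.trans_lt hyM⟩ ⟨hx.trans_le hxy, hyM⟩ hxy
  rw [slope_def_field, slope_def_field, ← neg_div_neg_eq, ← neg_div_neg_eq (log x - _),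
    neg_sub, neg_sub, neg_sub, neg_sub, div_le_div_iff₀ (by linarith) (by linarith)] at hslope
  linarith

lemma mul_one_sub_le_of_le_min_or_max_le {t τ : ℝ} (h : t ≤ min τ (1 - τ) ∨ t ≥ max τ (1 - τ)) :
    t * (1 - t) ≤ τ * (1 - τ) := by
  rcases h with h | h
  · nlinarith [min_le_left τ (1 - τ), min_le_right τ (1 - τ)]
  · nlinarith [le_max_left τ (1 - τ), le_max_right τ (1 - τ)]

lemma mul_one_sub_le_of_min_le_of_le_max {t τ : ℝ} (h₁ : min τ (1 - τ) ≤ t)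
    (h₂ : t ≤ max τ (1 - τ)) : τ * (1 - τ) ≤ t * (1 - t) := by
  rcases le_total τ (1 - τ) with h | h
  · rw [min_eq_left h] at h₁
    rw [max_eq_right h] at h₂
    nlinarith
  · rw [min_eq_right h] at h₁
    rw [max_eq_left h] at h₂
    nlinarith

lemma wharm_eq {a b : ℝ} (ha : a ≠ 0) (hb : b ≠ 0) (t : ℝ) :
    wharm t a b = a * b / ((1 - t) * b + t * a) := by
  rw [wharm, ← inv_div]
  field_simp

lemma one_sub_mul_add_mul_pos {a b t : ℝ} (ha : 0 < a) (hb : 0 < b) (ht : t ∈ Icc (0 : ℝ) 1) :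
    0 < (1 - t) * b + t * a := by
  nlinarith [mul_nonneg ht.1 ha.le, mul_nonneg (sub_nonneg.2 ht.2) hb.le]

section HeinzHarm

variable {a b t : ℝ}

lemma heinzHarm_eq (ha : 0 < a) (hb : 0 < b) (ht : t ∈ Icc (0 : ℝ) 1) :
    heinzHarm t a b = a * b * (a + b) / (2 * (a * b + t * (1 - t) * (a - b) ^ 2)) := by
  have h₁ := one_sub_mul_add_mul_pos ha hb ht
  have h₂ := one_sub_mul_add_mul_pos ha hb (Icc.mem_iff_one_sub_mem.1 ht)
  have hs : 0 ≤ t * (1 - t) := mul_nonneg ht.1 (sub_nonneg.2 ht.2)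
  rw [heinzHarm, wharm_eq ha.ne' hb.ne', wharm_eq ha.ne' hb.ne', div_add_div _ _ h₁.ne' h₂.ne',
    div_div, div_eq_div_iff (by positivity) (by positivity)]
  ring

lemma heinzHarm_pos (ha : 0 < a) (hb : 0 < b) (ht : t ∈ Icc (0 : ℝ) 1) :
    0 < heinzHarm t a b := by
  have hs : 0 ≤ t * (1 - t) := mul_nonneg ht.1 (sub_nonneg.2 ht.2)
  rw [heinzHarm_eq ha hb ht]
  positivity

lemma heinzHarm_lt_arith_mean (ha : 0 < a) (hb : 0 < b) (hab : a ≠ b) (ht : t ∈ Ioo (0 : ℝ) 1) :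
    heinzHarm t a b < (a + b) / 2 := by
  have hs : 0 < t * (1 - t) := mul_pos ht.1 (sub_pos.2 ht.2)
  have hd : 0 < (a - b) ^ 2 := sq_pos_of_ne_zero (sub_ne_zero.2 hab)
  rw [heinzHarm_eq ha hb (Ioo_subset_Icc_self ht), div_lt_div_iff₀ (by positivity) two_pos]
  nlinarith [mul_pos (mul_pos (add_pos ha hb) hs) hd]

lemma heinzHarm_le_heinzHarm {τ : ℝ} (ha : 0 < a) (hb : 0 < b) (ht : t ∈ Icc (0 : ℝ) 1)
    (hτ : τ ∈ Icc (0 : ℝ) 1) (h : t * (1 - t) ≤ τ * (1 - τ)) :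
    heinzHarm τ a b ≤ heinzHarm t a b := by
  have hs : 0 ≤ t * (1 - t) := mul_nonneg ht.1 (sub_nonneg.2 ht.2)
  rw [heinzHarm_eq ha hb ht, heinzHarm_eq ha hb hτ]
  gcongr

lemma heinzHarm_sub_mul_log_sub_le {τ : ℝ} (ha : 0 < a) (hb : 0 < b) (hab : a ≠ b)
    (ht : t ∈ Ioo (0 : ℝ) 1) (hτ : τ ∈ Ioo (0 : ℝ) 1) (h : t * (1 - t) ≤ τ * (1 - τ)) :
    ((a + b) / 2 - heinzHarm τ a b) * (log ((a + b) / 2) - log (heinzHarm t a b))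
      ≤ ((a + b) / 2 - heinzHarm t a b) * (log ((a + b) / 2) - log (heinzHarm τ a b)) :=
  sub_mul_log_sub_le_of_le (heinzHarm_pos ha hb (Ioo_subset_Icc_self hτ))
    (heinzHarm_le_heinzHarm ha hb (Ioo_subset_Icc_self ht) (Ioo_subset_Icc_self hτ) h)
    (heinzHarm_lt_arith_mean ha hb hab ht)

lemma log_arith_mean_sub_log_heinzHarm_pos (ha : 0 < a) (hb : 0 < b) (hab : a ≠ b)
    (ht : t ∈ Ioo (0 : ℝ) 1) : 0 < log ((a + b) / 2) - log (heinzHarm t a b) :=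
  sub_pos.2 <| log_lt_log (heinzHarm_pos ha hb (Ioo_subset_Icc_self ht))
    (heinzHarm_lt_arith_mean ha hb hab ht)

end HeinzHarm

theorem stmt_6 (a b τ t : ℝ) (ha : 0 < a) (hb : 0 < b) (hab : a ≠ b)
    (hτ : τ ∈ Set.Ioo (0 : ℝ) 1) (ht : t ∈ Set.Ioo (0 : ℝ) 1) :
    ((t ≤ min τ (1 - τ) ∨ t ≥ max τ (1 - τ)) →
      ((a + b) / 2 - heinzHarm τ a b) / ((a + b) / 2 - heinzHarm t a b)
        ≤ (Real.log ((a + b) / 2) - Real.log (heinzHarm τ a b))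
            / (Real.log ((a + b) / 2) - Real.log (heinzHarm t a b))) ∧
    ((min τ (1 - τ) ≤ t ∧ t ≤ max τ (1 - τ)) →
      (Real.log ((a + b) / 2) - Real.log (heinzHarm τ a b))
          / (Real.log ((a + b) / 2) - Real.log (heinzHarm t a b))
        ≤ ((a + b) / 2 - heinzHarm τ a b) / ((a + b) / 2 - heinzHarm t a b)) := by
  have hgap_t := sub_pos.2 (heinzHarm_lt_arith_mean ha hb hab ht)
  have hloggap_t := log_arith_mean_sub_log_heinzHarm_pos ha hb hab ht
  constructor
  · intro h
    rw [div_le_div_iff₀ hgap_t hloggap_t]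
    linarith [heinzHarm_sub_mul_log_sub_le ha hb hab ht hτ (mul_one_sub_le_of_le_min_or_max_le h)]
  · rintro ⟨h₁, h₂⟩
    rw [div_le_div_iff₀ hloggap_t hgap_t]
    linarith [heinzHarm_sub_mul_log_sub_le ha hb hab hτ ht
      (mul_one_sub_le_of_min_le_of_le_max h₁ h₂)]
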